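/- arXiv:2602.22864 — 2 statements merged into one kernel-verified Lean document; each statement's English description precedes it below -/
import Mathlib

section
/- Let G be a transitive group of permutations of a set Ω. Then G is strongly primitive if and only if every non-trivial G-invariant topology on Ω is T1. -/
/-- A topology on `Ω` is invariant under a group `G` of permutations of `Ω`
if every element of `G` is a homeomorphism. -/
def TopInvariant {Ω : Type*} (G : Subgroup (Equiv.Perm Ω)) (τ : TopologicalSpace Ω) : Prop :=
  ∀ g ∈ G, ∀ s : Set Ω, τ.IsOpen s ↔ τ.IsOpen (g '' s)

/-- A topology on `Ω` is trivial if it is invariant under every permutation of `Ω`. -/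
def TopTrivial {Ω : Type*} (τ : TopologicalSpace Ω) : Prop :=
  ∀ (g : Equiv.Perm Ω) (s : Set Ω), τ.IsOpen s ↔ τ.IsOpen (g '' s)

/-- A group of permutations is transitive. -/
def SubgroupTransitive {Ω : Type*} (G : Subgroup (Equiv.Perm Ω)) : Prop :=
  ∀ x y : Ω, ∃ g ∈ G, g x = y

/-- A group of permutations is strongly primitive: it is transitive and the only
`G`-invariant preorders (reflexive and transitive relations) on `Ω` are
equality and the universal relation. -/
def SubgroupStronglyPrimitive {Ω : Type*} (G : Subgroup (Equiv.Perm Ω)) : Prop :=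
  SubgroupTransitive G ∧
    ∀ r : Ω → Ω → Prop, Reflexive r → Transitive r →
      (∀ g ∈ G, ∀ x y : Ω, r x y → r (g x) (g y)) →
      (∀ x y : Ω, r x y ↔ x = y) ∨ (∀ x y : Ω, r x y)

/-
The specialization preorder of a `G`-invariant topology is `G`-invariant; it is equality exactly
when the topology is T1, and universal exactly when the topology is indiscrete (hence trivial).
Conversely, a `G`-invariant preorder is the specialization preorder of the Alexandrov topology
whose open sets are its lower sets, and that topology is `G`-invariant. If it is trivial, the
preorder is invariant under all of `Sym(Ω)`, which is 2-transitive, so the preorder is equality or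
universal; otherwise it is T1 by hypothesis, so the preorder is equality.
-/

section Invariance

variable {Ω : Type*}

theorem topInvariant_top_iff {τ : TopologicalSpace Ω} :
    TopInvariant ⊤ τ ↔ TopTrivial τ := by
  simp [TopInvariant, TopTrivial]

theorem eq_or_forall_of_perm_invariant {r : Ω → Ω → Prop} (hr : ∀ x, r x x)
    (h : ∀ g : Equiv.Perm Ω, ∀ x y, r x y → r (g x) (g y)) :
    (∀ x y, r x y ↔ x = y) ∨ ∀ x y, r x y := by
  by_cases hex : ∃ a b, a ≠ b ∧ r a b
  · obtain ⟨a, b, hab, hrab⟩ := hex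
    refine .inr fun x y => ?_
    rcases eq_or_ne x y with rfl | hxy
    · exact hr x
    · obtain ⟨g, rfl, rfl⟩ :=
        MulAction.is_two_pretransitive_iff.1 (Equiv.Perm.isMultiplyPretransitive Ω 2) hab hxy
      exact h g a b hrab
  · push Not at hex
    exact .inl fun x y => ⟨fun hxy => by_contra fun hne => hex x y hne hxy, fun h => h ▸ hr x⟩

section Topological

variable [t : TopologicalSpace Ω] {G : Subgroup (Equiv.Perm Ω)}

theorem TopInvariant.continuous (h : TopInvariant G t) {g : Equiv.Perm Ω} (hg : g ∈ G) :
    Continuous g := by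
  refine continuous_def.2 fun s hs => ?_
  rw [← Equiv.image_symm_eq_preimage]
  exact (h g hg _).2 (by rwa [Equiv.image_symm_image])

theorem TopInvariant.specializes_apply (h : TopInvariant G t) {g : Equiv.Perm Ω} (hg : g ∈ G)
    {x y : Ω} (hxy : x ⤳ y) : g x ⤳ g y :=
  hxy.map (h.continuous hg)

theorem topTrivial_of_indiscreteTopology [IndiscreteTopology Ω] : TopTrivial t := by
  intro g s
  change IsOpen s ↔ IsOpen (g '' s)
  rw [IndiscreteTopology.isOpen_iff, IndiscreteTopology.isOpen_iff, Set.image_eq_empty,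
    Equiv.image_eq_preimage_symm, Set.preimage_eq_univ_iff, Equiv.range_eq_univ,
    Set.univ_subset_iff]

theorem SubgroupStronglyPrimitive.t1Space (hG : SubgroupStronglyPrimitive G)
    (hinv : TopInvariant G t) (hnt : ¬ TopTrivial t) : T1Space Ω := by
  rcases hG.2 (· ⤳ ·) (fun _ => specializes_rfl) (fun _ _ _ => .trans)
      (fun g hg _ _ => hinv.specializes_apply hg)
    with heq | hall
  · exact t1Space_iff_specializes_imp_eq.2 fun x y => (heq x y).1
  · have := IndiscreteTopology.of_forall_inseparable fun x y => (hall x y).antisymm (hall y x)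
    exact absurd topTrivial_of_indiscreteTopology hnt

end Topological

section LowerSet

variable [Preorder Ω] [t : TopologicalSpace Ω] [Topology.IsLowerSet Ω]
  {G : Subgroup (Equiv.Perm Ω)}

theorem Topology.IsLowerSet.topInvariant_iff_monotone :
    TopInvariant G t ↔ ∀ g ∈ G, Monotone g := by
  refine ⟨fun h g hg x y hxy => ?_, fun hG g hg s => ?_⟩
  · rw [← specializes_iff_le] at hxy ⊢
    exact h.specializes_apply hg hxy
  · have hsymm : Monotone g.symm := hG g⁻¹ (inv_mem hg)
    change IsOpen s ↔ IsOpen (g '' s)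
    simp only [isOpen_iff_isLowerSet]
    exact ⟨fun hs => hs.image (g.toOrderIso (hG g hg) hsymm),
      fun hs => by simpa using hs.image (g.symm.toOrderIso hsymm (hG g hg))⟩

theorem Topology.IsLowerSet.t1Space_iff_le_imp_eq :
    T1Space Ω ↔ ∀ x y : Ω, x ≤ y → x = y := by
  simp only [t1Space_iff_specializes_imp_eq, specializes_iff_le]

end LowerSet

end Invariance

theorem stronglyPrimitive_iff_invariant_topologies_T1 {Ω : Type*} (G : Subgroup (Equiv.Perm Ω))
    (hG : SubgroupTransitive G) :
    SubgroupStronglyPrimitive G ↔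
      ∀ τ : TopologicalSpace Ω, TopInvariant G τ → ¬ TopTrivial τ → @T1Space Ω τ := by
  refine ⟨fun hsp τ => hsp.t1Space, fun H => ⟨hG, fun r hrefl htrans hr => ?_⟩⟩
  let _ : Preorder Ω := { le := r, le_refl := hrefl, le_trans := htrans }
  let τ := Topology.lowerSet Ω
  have hτ : TopInvariant G τ :=
    Topology.IsLowerSet.topInvariant_iff_monotone.2 fun g hg _ _ => hr g hg _ _
  by_cases htriv : TopTrivial τ
  · have hperm := Topology.IsLowerSet.topInvariant_iff_monotone.1 (topInvariant_top_iff.2 htriv)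
    exact eq_or_forall_of_perm_invariant hrefl fun g _ _ hxy => hperm g trivial hxy
  · exact .inl fun x y => ⟨(Topology.IsLowerSet.t1Space_iff_le_imp_eq.1 (H τ hτ htriv)) x y,
      fun h => h ▸ hrefl x⟩
end

section
/- There exists an infinite sequence (Rₙ)ₙ≥1 of simple graphs on a common countably infinite vertex set V such that for every n every edge of Rₙ is an edge of Rₙ₊₁, every Rₙ satisfies the extension property, and for every n the neighbourhood filter F_{Rₙ₊₁} is properly contained in F_{Rₙ}. -/
/-- The neighbourhood filter of a graph: the filter generated by the open
neighbourhoods of the vertices. -/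
def nbhdFilter {V : Type*} (Γ : SimpleGraph V) : Filter V :=
  Filter.generate {s : Set V | ∃ v : V, s = Γ.neighborSet v}

/-- A graph on a countably infinite vertex set has the extension property
(characterising the Rado graph) if for all disjoint finite sets `U`, `W` of vertices
there is a vertex outside `U ∪ W` adjacent to everything in `U` and nothing in `W`. -/
def ExtensionProperty {V : Type*} (R : SimpleGraph V) : Prop :=
  ∀ U W : Finset V, Disjoint U W →
    ∃ z : V, z ∉ U ∧ z ∉ W ∧ (∀ u ∈ U, R.Adj z u) ∧ (∀ w ∈ W, ¬ R.Adj z w)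

/-!
Take Ackermann's model of the Rado graph on the positive integers (`i < j` adjacent iff bit `i`
of `j` is set) and add a vertex `0` joined to `j` according to a set `P` of binary lengths of `j`.
To realise given adjacencies to finitely many vertices one takes `j = 2 ^ m + ∑ 2 ^ u`, whose
length `m` may be any large number, so the extension property holds as soon as both `P` and its
complement are infinite. Enlarging `P` enlarges the graph, and if infinitely many lengths are
added then no finite intersection of new neighbourhoods fits inside the old neighbourhood of `0`.
The sets `Pₙ = {m | (Nat.unpair m).1 ≤ n}` form such a chain.
-/

open Filter

namespace Nat

theorem testBit_sum_two_pow (s : Finset ℕ) (k : ℕ) : (∑ i ∈ s, 2 ^ i).testBit k ↔ k ∈ s := by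
  rw [← mem_bitIndices, ← List.mem_toFinset, Finset.toFinset_bitIndices_sum_two_pow]

theorem log_two_sum_two_pow {s : Finset ℕ} {m : ℕ} (hm : m ∈ s) (hs : ∀ i ∈ s, i ≤ m) :
    log 2 (∑ i ∈ s, 2 ^ i) = m :=
  log_eq_of_pow_le_of_lt_pow (Finset.single_le_sum (fun _ _ => Nat.zero_le _) hm)
    (geomSum_lt le_rfl fun i hi => lt_succ_of_le (hs i hi))

theorem exists_log_two_eq_and_testBit_iff {U : Finset ℕ} {m : ℕ} (hU : ∀ u ∈ U, u < m) :
    ∃ z, m < z ∧ log 2 z = m ∧ ∀ w < m, (z.testBit w ↔ w ∈ U) := by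
  have hmem : m ∈ insert m U := Finset.mem_insert_self m U
  refine ⟨∑ i ∈ insert m U, 2 ^ i, Finset.lt_geomSum_of_mem le_rfl hmem,
    log_two_sum_two_pow hmem fun i hi => ?_, fun w hw => ?_⟩
  · rcases Finset.mem_insert.1 hi with rfl | hi
    exacts [le_rfl, (hU i hi).le]
  · rw [testBit_sum_two_pow, Finset.mem_insert, or_iff_right hw.ne]

theorem frequently_unpair_fst_eq (i : ℕ) : ∃ᶠ m in atTop, (unpair m).1 = i :=
  frequently_atTop.2 fun a => ⟨pair i a, right_le_pair i a, by rw [unpair_pair]⟩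

end Nat

section NbhdFilter

variable {V : Type*}

theorem nbhdFilter_eq_iInf (Γ : SimpleGraph V) :
    nbhdFilter Γ = ⨅ v, 𝓟 (Γ.neighborSet v) := by
  have : {s | ∃ v, s = Γ.neighborSet v} = Set.range Γ.neighborSet := by ext; simp [eq_comm]
  rw [nbhdFilter, this, generate_eq_biInf, iInf_range]

theorem neighborSet_mem_nbhdFilter (Γ : SimpleGraph V) (v : V) : Γ.neighborSet v ∈ nbhdFilter Γ :=
  mem_generate_of_mem ⟨v, rfl⟩

theorem exists_finset_of_mem_nbhdFilter {Γ : SimpleGraph V} {s : Set V}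
    (hs : s ∈ nbhdFilter Γ) : ∃ S : Finset V, ⋂ v ∈ S, Γ.neighborSet v ⊆ s := by
  rw [nbhdFilter_eq_iInf, mem_iInf_finite] at hs
  obtain ⟨S, hS⟩ := hs
  exact ⟨S, by rwa [iInf_principal_finset, mem_principal] at hS⟩

theorem nbhdFilter_mono {Γ Γ' : SimpleGraph V} (h : Γ ≤ Γ') : nbhdFilter Γ ≤ nbhdFilter Γ' := by
  simp only [nbhdFilter_eq_iInf]
  exact iInf_mono fun v => principal_mono.2 fun _ hw => h hw

end NbhdFilter

def bitGraph (P : ℕ → Prop) : SimpleGraph ℕ :=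
  SimpleGraph.fromRel fun i j => i < j ∧ if i = 0 then P (Nat.log 2 j) else j.testBit i

section BitGraph

variable {P Q : ℕ → Prop}

theorem bitGraph_adj_iff_of_lt {x z : ℕ} (hxz : x < z) :
    (bitGraph P).Adj z x ↔ if x = 0 then P (Nat.log 2 z) else z.testBit x := by
  simp only [bitGraph, SimpleGraph.fromRel_adj, hxz.ne', not_lt_of_gt hxz, hxz, false_and,
    true_and, false_or, ne_eq, not_false_eq_true]

theorem bitGraph_mono (h : ∀ m, P m → Q m) : bitGraph P ≤ bitGraph Q := by
  have hrel : ∀ i j, i < j ∧ (if i = 0 then P (Nat.log 2 j) else j.testBit i) →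
      i < j ∧ (if i = 0 then Q (Nat.log 2 j) else j.testBit i) := by
    rintro i j ⟨hij, hadj⟩
    split_ifs at hadj ⊢
    exacts [⟨hij, h _ hadj⟩, ⟨hij, hadj⟩]
  exact fun i j ⟨hne, hadj⟩ => ⟨hne, hadj.imp (hrel i j) (hrel j i)⟩

theorem extensionProperty_bitGraph (hP : ∃ᶠ m in atTop, P m) (hnP : ∃ᶠ m in atTop, ¬ P m) :
    ExtensionProperty (bitGraph P) := by
  intro U W hUW
  have hbig : ∀ᶠ m in atTop, ∀ x ∈ U ∪ W, x < m :=
    (eventually_all_finset _).2 fun x _ => eventually_gt_atTop x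
  obtain ⟨m, hUWm, hPU, hPW⟩ : ∃ m, (∀ x ∈ U ∪ W, x < m) ∧ (0 ∈ U → P m) ∧ (0 ∈ W → ¬ P m) := by
    by_cases h0 : 0 ∈ U
    · obtain ⟨m, hm, hPm⟩ := (hbig.and_frequently hP).exists
      exact ⟨m, hm, fun _ => hPm, fun h0W => absurd h0W (Finset.disjoint_left.1 hUW h0)⟩
    · obtain ⟨m, hm, hPm⟩ := (hbig.and_frequently hnP).exists
      exact ⟨m, hm, fun h => absurd h h0, fun _ => hPm⟩
  obtain ⟨z, hmz, hlog, hbits⟩ :=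
    Nat.exists_log_two_eq_and_testBit_iff fun u hu => hUWm u (Finset.mem_union_left W hu)
  have hxz : ∀ x ∈ U ∪ W, x < z := fun x hx => (hUWm x hx).trans hmz
  refine ⟨z, fun hz => (hxz z (Finset.mem_union_left W hz)).false,
    fun hz => (hxz z (Finset.mem_union_right U hz)).false, fun u hu => ?_, fun w hw => ?_⟩
  · rw [bitGraph_adj_iff_of_lt (hxz u (Finset.mem_union_left W hu)), hlog]
    split_ifs with h0
    exacts [hPU (h0 ▸ hu), (hbits u (hUWm u (Finset.mem_union_left W hu))).2 hu]
  · rw [bitGraph_adj_iff_of_lt (hxz w (Finset.mem_union_right U hw)), hlog]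
    split_ifs with h0
    exacts [hPW (h0 ▸ hw), fun hbit => Finset.disjoint_right.1 hUW hw
      ((hbits w (hUWm w (Finset.mem_union_right U hw))).1 hbit)]

theorem neighborSet_zero_notMem_nbhdFilter_bitGraph (h : ∃ᶠ m in atTop, Q m ∧ ¬ P m) :
    (bitGraph P).neighborSet 0 ∉ nbhdFilter (bitGraph Q) := by
  intro hmem
  obtain ⟨S, hS⟩ := exists_finset_of_mem_nbhdFilter hmem
  obtain ⟨m, hSm, hQm, hPm⟩ :=
    (((eventually_all_finset S).2 fun v _ => eventually_gt_atTop v).and_frequently h).exists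
  obtain ⟨z, hmz, hlog, hbits⟩ := Nat.exists_log_two_eq_and_testBit_iff hSm
  have hz : z ∈ ⋂ v ∈ S, (bitGraph Q).neighborSet v := by
    simp only [Set.mem_iInter, SimpleGraph.mem_neighborSet]
    intro v hv
    rw [SimpleGraph.adj_comm, bitGraph_adj_iff_of_lt ((hSm v hv).trans hmz), hlog]
    split_ifs
    exacts [hQm, (hbits v (hSm v hv)).2 hv]
  have h0z := hS hz
  rw [SimpleGraph.mem_neighborSet, SimpleGraph.adj_comm, bitGraph_adj_iff_of_lt (by omega),
    if_pos rfl, hlog] at h0z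
  exact hPm h0z

end BitGraph

/-- There is an infinite increasing chain of copies of the Rado graph on a common
countably infinite vertex set whose neighbourhood filters form a strictly
decreasing chain. -/
theorem exists_chain_of_rado_nbhdFilters :
    ∃ (V : Type) (_ : Countable V) (_ : Infinite V) (R : ℕ → SimpleGraph V),
      (∀ n : ℕ, R n ≤ R (n + 1)) ∧
      (∀ n : ℕ, ExtensionProperty (R n)) ∧
      (∀ n : ℕ, (∀ s : Set V, s ∈ nbhdFilter (R (n + 1)) → s ∈ nbhdFilter (R n)) ∧
        nbhdFilter (R (n + 1)) ≠ nbhdFilter (R n)) := by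
  let R n := bitGraph fun m => (Nat.unpair m).1 ≤ n
  have hR : ∀ n, R n ≤ R (n + 1) := fun n => bitGraph_mono fun m hm => hm.trans n.le_succ
  refine ⟨ℕ, inferInstance, inferInstance, R, hR, fun n => ?_,
    fun n => ⟨fun s hs => nbhdFilter_mono (hR n) hs, fun heq => ?_⟩⟩
  · exact extensionProperty_bitGraph
      ((Nat.frequently_unpair_fst_eq 0).mono fun m hm => hm ▸ n.zero_le)
      ((Nat.frequently_unpair_fst_eq (n + 1)).mono fun m hm => by omega)
  · refine neighborSet_zero_notMem_nbhdFilter_bitGraph ?_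
      (heq ▸ neighborSet_mem_nbhdFilter (R n) 0)
    exact (Nat.frequently_unpair_fst_eq (n + 1)).mono fun m hm => by omega
end
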